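/- arXiv:1905.03846 — 2 statements merged into one kernel-verified Lean document; each statement's English description precedes it below -/
import Mathlib

section
/- Let a₁ ≥ a₂ ≥ a₃ > 0 and s ∈ ℝ. Then (a₁^{2s} + a₂^{2s} + a₃^{2s})(a₁^{-2s} + a₂^{-2s} + a₃^{-2s}) ≤ 7 + 2(a₁/a₃)^{2|s|}. -/
lemma rpow_add_rpow_neg_abs (r t : ℝ) (_hr : 0 < r) :
    r ^ t + r ^ (-t) = r ^ |t| + r ^ (-|t|) := by
  rcases abs_cases t with ⟨h, _⟩ | ⟨h, _⟩
  · rw [h]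
  · rw [h, neg_neg]; ring

theorem stmt9 (a₁ a₂ a₃ s : ℝ) (h3 : 0 < a₃) (h23 : a₃ ≤ a₂) (h12 : a₂ ≤ a₁) :
    (a₁ ^ (2*s) + a₂ ^ (2*s) + a₃ ^ (2*s)) * (a₁ ^ (-(2*s)) + a₂ ^ (-(2*s)) + a₃ ^ (-(2*s)))
      ≤ 7 + 2 * (a₁ / a₃) ^ (2 * |s|) := by
  have h2 : 0 < a₂ := lt_of_lt_of_le h3 h23
  have h1 : 0 < a₁ := lt_of_lt_of_le h2 h12
  set t := 2 * s with ht
  have habs : |t| = 2 * |s| := by rw [ht, abs_mul, abs_two]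
  have hb1 : (0:ℝ) < a₁ ^ t := Real.rpow_pos_of_pos h1 t
  have hb2 : (0:ℝ) < a₂ ^ t := Real.rpow_pos_of_pos h2 t
  have hb3 : (0:ℝ) < a₃ ^ t := Real.rpow_pos_of_pos h3 t
  -- rewrite negative exponents as inverses
  have hneg : ∀ a : ℝ, 0 < a → a ^ (-t) = (a ^ t)⁻¹ := fun a ha =>
    Real.rpow_neg ha.le t
  rw [hneg a₁ h1, hneg a₂ h2, hneg a₃ h3]
  -- key expansion
  have hdiv : ∀ a b : ℝ, 0 < a → 0 < b → ∀ u : ℝ, (a / b) ^ u = a ^ u / b ^ u := by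
    intro a b ha hb u
    rw [Real.div_rpow ha.le hb.le]
  have hexp :
      (a₁ ^ t + a₂ ^ t + a₃ ^ t) * ((a₁ ^ t)⁻¹ + (a₂ ^ t)⁻¹ + (a₃ ^ t)⁻¹)
        = 3 + ((a₁/a₂) ^ t + (a₁/a₂) ^ (-t)) + ((a₂/a₃) ^ t + (a₂/a₃) ^ (-t))
            + ((a₁/a₃) ^ t + (a₁/a₃) ^ (-t)) := by
    rw [hdiv a₁ a₂ h1 h2, hdiv a₂ a₃ h2 h3, hdiv a₁ a₃ h1 h3,
      hneg (a₁/a₂) (div_pos h1 h2), hneg (a₂/a₃) (div_pos h2 h3),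
      hneg (a₁/a₃) (div_pos h1 h3),
      hdiv a₁ a₂ h1 h2, hdiv a₂ a₃ h2 h3, hdiv a₁ a₃ h1 h3]
    field_simp
    ring
  rw [hexp,
    rpow_add_rpow_neg_abs _ t (div_pos h1 h2),
    rpow_add_rpow_neg_abs _ t (div_pos h2 h3),
    rpow_add_rpow_neg_abs _ t (div_pos h1 h3), habs]
  set T := 2 * |s| with hT
  have hT0 : 0 ≤ T := by positivity
  set x := (a₁/a₂) ^ T with hx
  set y := (a₂/a₃) ^ T with hy
  have hxy : x * y = (a₁/a₃) ^ T := by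
    rw [hx, hy, ← Real.mul_rpow (by positivity) (by positivity)]
    congr 1
    field_simp
  have hx1 : 1 ≤ x := Real.one_le_rpow ((le_div_iff₀ h2).mpr (by linarith)) hT0
  have hy1 : 1 ≤ y := Real.one_le_rpow ((le_div_iff₀ h3).mpr (by linarith)) hT0
  have hxpos : 0 < x := by positivity
  have hypos : 0 < y := by positivity
  have hnx : (a₁/a₂) ^ (-T) = x⁻¹ := by
    rw [hx, ← Real.rpow_neg (by positivity)]
  have hny : (a₂/a₃) ^ (-T) = y⁻¹ := by
    rw [hy, ← Real.rpow_neg (by positivity)]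
  have hnz : (a₁/a₃) ^ (-T) = (x*y)⁻¹ := by
    rw [hxy, ← Real.rpow_neg (by positivity)]
  rw [hnx, hny, hnz, ← hxy]
  have hix : x⁻¹ ≤ 1 := by exact inv_le_one_of_one_le₀ hx1
  have hiy : y⁻¹ ≤ 1 := by exact inv_le_one_of_one_le₀ hy1
  have hixy : (x*y)⁻¹ ≤ 1 := by
    apply inv_le_one_of_one_le₀
    nlinarith
  nlinarith [mul_nonneg (sub_nonneg.mpr hx1) (sub_nonneg.mpr hy1)]
end

section
/- Let s ∈ ℝ and a₁ ≥ a₂ ≥ a₃ > 0. If (a₁/a₃)^{2|s|} < 1129/49, then 51/7 - √((a₁^{2s}+a₂^{2s}+a₃^{2s})(a₁^{-2s}+a₂^{-2s}+a₃^{-2s})) > 0. -/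
lemma stmt10_aux (a₁ a₂ a₃ s : ℝ) (h3 : 0 < a₃) (h23 : a₃ ≤ a₂) (h12 : a₂ ≤ a₁)
    (hs : 0 ≤ s) (hlt : (a₁ / a₃) ^ (2 * s) < 1129 / 49) :
    (a₁ ^ (2*s) + a₂ ^ (2*s) + a₃ ^ (2*s)) *
      (a₁ ^ (-(2*s)) + a₂ ^ (-(2*s)) + a₃ ^ (-(2*s))) < 2601 / 49 := by
  have h2 : 0 < a₂ := lt_of_lt_of_le h3 h23
  have h1 : 0 < a₁ := lt_of_lt_of_le h2 h12
  set t := 2 * s with ht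
  have ht0 : 0 ≤ t := by positivity
  have hA : 0 < a₁ ^ t := Real.rpow_pos_of_pos h1 t
  have hB : 0 < a₂ ^ t := Real.rpow_pos_of_pos h2 t
  have hC : 0 < a₃ ^ t := Real.rpow_pos_of_pos h3 t
  have hAB : a₂ ^ t ≤ a₁ ^ t := Real.rpow_le_rpow h2.le h12 ht0
  have hBC : a₃ ^ t ≤ a₂ ^ t := Real.rpow_le_rpow h3.le h23 ht0
  have hR : a₁ ^ t / a₃ ^ t < 1129 / 49 := by
    rwa [Real.div_rpow h1.le h3.le] at hlt
  set A := a₁ ^ t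
  set B := a₂ ^ t
  set C := a₃ ^ t
  have hR' : 49 * A < 1129 * C := by
    rw [div_lt_div_iff₀ hC (by norm_num : (0:ℝ) < 49)] at hR
    linarith
  have e1 : a₁ ^ (-t) = A⁻¹ := by rw [Real.rpow_neg h1.le]
  have e2 : a₂ ^ (-t) = B⁻¹ := by rw [Real.rpow_neg h2.le]
  have e3 : a₃ ^ (-t) = C⁻¹ := by rw [Real.rpow_neg h3.le]
  rw [e1, e2, e3]
  have heq : (A + B + C) * (A⁻¹ + B⁻¹ + C⁻¹)
      = ((A + B + C) * (B * C + A * C + A * B)) / (A * B * C) := by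
    field_simp
  rw [heq, div_lt_iff₀ (by positivity)]
  nlinarith [mul_nonneg (sub_nonneg.2 hAB) (sub_nonneg.2 hBC),
    mul_pos hA hB, mul_pos hB hC, mul_pos hA hC,
    mul_lt_mul_of_pos_right hR' (mul_pos hB hC),
    mul_le_mul_of_nonneg_right hAB (mul_pos hA hC).le,
    mul_le_mul_of_nonneg_right hBC (mul_pos hA hB).le,
    mul_le_mul_of_nonneg_right (hBC.trans hAB) (mul_pos hA hB).le,
    mul_nonneg (mul_nonneg (sub_nonneg.2 hAB) (sub_nonneg.2 hBC)) hC.le,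
    mul_pos hC hC]

theorem stmt10 (a₁ a₂ a₃ s : ℝ) (h3 : 0 < a₃) (h23 : a₃ ≤ a₂) (h12 : a₂ ≤ a₁)
    (hlt : (a₁ / a₃) ^ (2 * |s|) < 1129 / 49) :
    0 < 51 / 7 - Real.sqrt ((a₁ ^ (2*s) + a₂ ^ (2*s) + a₃ ^ (2*s)) *
      (a₁ ^ (-(2*s)) + a₂ ^ (-(2*s)) + a₃ ^ (-(2*s)))) := by
  have key : (a₁ ^ (2*s) + a₂ ^ (2*s) + a₃ ^ (2*s)) *
      (a₁ ^ (-(2*s)) + a₂ ^ (-(2*s)) + a₃ ^ (-(2*s))) < 2601 / 49 := by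
    rcases le_or_gt 0 s with hs | hs
    · rw [abs_of_nonneg hs] at hlt
      exact stmt10_aux a₁ a₂ a₃ s h3 h23 h12 hs hlt
    · rw [abs_of_neg hs] at hlt
      have := stmt10_aux a₁ a₂ a₃ (-s) h3 h23 h12 (by linarith) hlt
      have e : 2 * (-s) = -(2*s) := by ring
      have e' : -(2 * (-s)) = 2*s := by ring
      rw [e] at this
      simp only [neg_neg] at this
      linarith [this, mul_comm
        (a₁ ^ (-(2*s)) + a₂ ^ (-(2*s)) + a₃ ^ (-(2*s)))
        (a₁ ^ (2*s) + a₂ ^ (2*s) + a₃ ^ (2*s))]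
  have hsqrt : Real.sqrt ((a₁ ^ (2*s) + a₂ ^ (2*s) + a₃ ^ (2*s)) *
      (a₁ ^ (-(2*s)) + a₂ ^ (-(2*s)) + a₃ ^ (-(2*s)))) < 51 / 7 := by
    rw [show (51:ℝ)/7 = Real.sqrt ((51/7)^2) by
      rw [Real.sqrt_sq (by norm_num)]]
    apply Real.sqrt_lt_sqrt
    · have h2 : 0 < a₂ := lt_of_lt_of_le h3 h23
      have h1 : 0 < a₁ := lt_of_lt_of_le h2 h12
      positivity
    · nlinarith [key]
  linarith
end
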